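/- For a real number a with |a| < 1 and σ² > 0 define, for ℓ ∈ ℤ and u, v ∈ ℝ, C_{ℓ,a,σ²}(u,v) = exp(−(σ²/(2(1−a²)))(u² + v²))·(exp(−(σ²/(1−a²))·u·v·a^{|ℓ|}) − 1). If a, a' ∈ (−1,1) and σ², σ'² > 0 satisfy C_{ℓ,a,σ²}(u,v) = C_{ℓ,a',σ'²}(u,v) for all ℓ ∈ ℤ and all u, v ∈ ℝ, then a = a' and σ² = σ'². -/
import Mathlib


open Real

/-- Fourier coefficients of the generalized spectrum of the causal Gaussian AR(1)
model with coefficient `a` (`|a| < 1`) and innovation variance `σ2`. -/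
noncomputable def gaussAR1Coef (a σ2 : ℝ) (ℓ : ℤ) (u v : ℝ) : ℝ :=
  Real.exp (-(σ2 / (2 * (1 - a ^ 2))) * (u ^ 2 + v ^ 2)) *
    (Real.exp (-(σ2 / (1 - a ^ 2)) * u * v * a ^ ℓ.natAbs) - 1)

/-- Identifiability of the causal Gaussian AR(1) model from the family of Fourier
coefficients of its generalized spectrum. -/
theorem gaussAR1_identifiable (a a' σ2 σ2' : ℝ)
    (ha : a ∈ Set.Ioo (-1 : ℝ) 1) (ha' : a' ∈ Set.Ioo (-1 : ℝ) 1)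
    (hσ : 0 < σ2) (hσ' : 0 < σ2')
    (h : ∀ (ℓ : ℤ) (u v : ℝ), gaussAR1Coef a σ2 ℓ u v = gaussAR1Coef a' σ2' ℓ u v) :
    a = a' ∧ σ2 = σ2' := by
  obtain ⟨ha1, ha2⟩ := ha
  obtain ⟨ha1', ha2'⟩ := ha'
  have h1a : (0:ℝ) < 1 - a ^ 2 := by nlinarith
  have h1a' : (0:ℝ) < 1 - a' ^ 2 := by nlinarith
  set c := σ2 / (1 - a ^ 2) with hc
  set c' := σ2' / (1 - a' ^ 2) with hc'
  have hcpos : 0 < c := div_pos hσ h1a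
  have hc'pos : 0 < c' := div_pos hσ' h1a'
  set s := Real.log 2 / (2 * (c + c')) with hs
  have hspos : 0 < s := div_pos (Real.log_pos (by norm_num)) (by linarith)
  set t := Real.sqrt s with ht
  have ht2 : t ^ 2 = s := Real.sq_sqrt hspos.le
  have htt : t * t = s := by rw [← ht2]; ring
  -- smallness: c*s < log 2 and c'*s < log 2
  have hlog : 0 < Real.log 2 := Real.log_pos (by norm_num)
  have hD : 0 < 2 * (c + c') := by linarith
  have hcs : c * s < Real.log 2 := by
    rw [hs, ← mul_div_assoc, div_lt_iff₀ hD]; nlinarith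
  have hc's : c' * s < Real.log 2 := by
    rw [hs, ← mul_div_assoc, div_lt_iff₀ hD]; nlinarith
  -- rewrite the ℓ = 0 instance
  have ea : gaussAR1Coef a σ2 0 t t
      = Real.exp (-(c * s)) * (Real.exp (-(c * s)) - 1) := by
    simp only [gaussAR1Coef, Int.natAbs_zero, pow_zero, mul_one, ht2, htt]
    have h1 : -(σ2 / (2 * (1 - a ^ 2))) * (s + s) = -(c * s) := by
      rw [hc]; field_simp; ring
    have h2 : -(σ2 / (1 - a ^ 2)) * t * t = -(c * s) := by
      rw [hc, mul_assoc, htt]; ring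
    rw [h1, h2]
  have ea' : gaussAR1Coef a' σ2' 0 t t
      = Real.exp (-(c' * s)) * (Real.exp (-(c' * s)) - 1) := by
    simp only [gaussAR1Coef, Int.natAbs_zero, pow_zero, mul_one, ht2, htt]
    have h1 : -(σ2' / (2 * (1 - a' ^ 2))) * (s + s) = -(c' * s) := by
      rw [hc']; field_simp; ring
    have h2 : -(σ2' / (1 - a' ^ 2)) * t * t = -(c' * s) := by
      rw [hc', mul_assoc, htt]; ring
    rw [h1, h2]
  have e0 : Real.exp (-(c * s)) * (Real.exp (-(c * s)) - 1)
      = Real.exp (-(c' * s)) * (Real.exp (-(c' * s)) - 1) := by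
    rw [← ea, ← ea', h 0 t t]
  set X := Real.exp (-(c * s)) with hX
  set Y := Real.exp (-(c' * s)) with hY
  have hXhalf : (1:ℝ) / 2 < X := by
    have : Real.exp (-(Real.log 2)) < X := Real.exp_lt_exp.2 (by linarith)
    rwa [Real.exp_neg, Real.exp_log (by norm_num : (0:ℝ) < 2), ← one_div] at this
  have hYhalf : (1:ℝ) / 2 < Y := by
    have : Real.exp (-(Real.log 2)) < Y := Real.exp_lt_exp.2 (by linarith)
    rwa [Real.exp_neg, Real.exp_log (by norm_num : (0:ℝ) < 2), ← one_div] at this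
  have hXY : X = Y := by
    have hfact : (X - Y) * (X + Y - 1) = 0 := by nlinarith [e0]
    rcases mul_eq_zero.1 hfact with h1 | h1
    · linarith
    · exfalso; linarith
  have hcc' : c = c' := by
    have := Real.exp_eq_exp.1 hXY
    have : c * s = c' * s := by linarith
    exact mul_right_cancel₀ hspos.ne' this
  -- ℓ = 1 instance to get a = a'
  have eb : gaussAR1Coef a σ2 1 t t = X * (Real.exp (-(c * s * a)) - 1) := by
    simp only [gaussAR1Coef, Int.natAbs_one, pow_one, ht2, hX]
    have h1 : -(σ2 / (2 * (1 - a ^ 2))) * (s + s) = -(c * s) := by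
      rw [hc]; field_simp; ring
    have h2 : -(σ2 / (1 - a ^ 2)) * t * t * a = -(c * s * a) := by
      rw [hc]; linear_combination (-(σ2 / (1 - a ^ 2)) * a) * htt
    rw [h1, h2]
  have eb' : gaussAR1Coef a' σ2' 1 t t = Y * (Real.exp (-(c' * s * a')) - 1) := by
    simp only [gaussAR1Coef, Int.natAbs_one, pow_one, ht2, hY]
    have h1 : -(σ2' / (2 * (1 - a' ^ 2))) * (s + s) = -(c' * s) := by
      rw [hc']; field_simp; ring
    have h2 : -(σ2' / (1 - a' ^ 2)) * t * t * a' = -(c' * s * a') := by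
      rw [hc']; linear_combination (-(σ2' / (1 - a' ^ 2)) * a') * htt
    rw [h1, h2]
  have e1 : X * (Real.exp (-(c * s * a)) - 1) = Y * (Real.exp (-(c' * s * a')) - 1) := by
    rw [← eb, ← eb', h 1 t t]
  rw [← hXY, ← hcc'] at e1
  have hXne : X ≠ 0 := Real.exp_ne_zero _
  have e2 : Real.exp (-(c * s * a)) = Real.exp (-(c * s * a')) := by
    have := mul_left_cancel₀ hXne e1
    linarith
  have haa' : a = a' := by
    have := Real.exp_eq_exp.1 e2
    have h3 : c * s * a = c * s * a' := by linarith
    exact mul_left_cancel₀ (by positivity : (c * s) ≠ 0) h3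
  refine ⟨haa', ?_⟩
  have hfin : σ2 / (1 - a ^ 2) = σ2' / (1 - a' ^ 2) := hcc'
  rw [haa'] at hfin
  rw [div_eq_div_iff h1a'.ne' h1a'.ne'] at hfin
  exact mul_right_cancel₀ h1a'.ne' hfin
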